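/- arXiv:1103.2411 — 4 statements merged into one kernel-verified Lean document; each statement's English description precedes it below -/
import Mathlib

section
/- Let I : ℝ → ℝ → ℝ be a function of a prior plausibility p > 0 and a posterior plausibility q > 0 satisfying: (1) for every p > 0 the map q ↦ I(p,q) is differentiable on (0,∞); (2) for every p > 0 the map q ↦ I(p,q) is strictly increasing on (0,∞); (3) path independence: for all p, r, r', q > 0, I(p,r) + I(r,q) = I(p,r') + I(r',q); (4) unit independence: for all t, p, q > 0, I(t·p, t·q) = I(p,q); (5) for all p > 0, I(p,p) = 0. Then there exists a constant k > 0 such that I(p,q) = k · log(q/p) for all p, q > 0. -/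
/-- Axioms IG-1 through IG-5 for an information gain function `I` of a prior
plausibility `p > 0` and posterior plausibility `q > 0` force
`I p q = k * log (q / p)` for some constant `k > 0`. -/
theorem information_gain_is_log_ratio
    (I : ℝ → ℝ → ℝ)
    (hdiff : ∀ p > (0 : ℝ), DifferentiableOn ℝ (fun q => I p q) (Set.Ioi 0))
    (hmono : ∀ p > (0 : ℝ), StrictMonoOn (fun q => I p q) (Set.Ioi 0))
    (hpath : ∀ p > (0 : ℝ), ∀ r > (0 : ℝ), ∀ r' > (0 : ℝ), ∀ q > (0 : ℝ),
      I p r + I r q = I p r' + I r' q)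
    (hunit : ∀ t > (0 : ℝ), ∀ p > (0 : ℝ), ∀ q > (0 : ℝ), I (t * p) (t * q) = I p q)
    (hzero : ∀ p > (0 : ℝ), I p p = 0) :
    ∃ k > (0 : ℝ), ∀ p > (0 : ℝ), ∀ q > (0 : ℝ), I p q = k * Real.log (q / p) := by
  set f : ℝ → ℝ := fun x => I 1 x with hf
  have one_pos : (0:ℝ) < 1 := one_pos
  -- I p 1 = - f p
  have hinv : ∀ p > (0:ℝ), I p 1 = - f p := by
    intro p hp
    have := hpath p hp 1 one_pos p hp p hp
    have h0 := hzero p hp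
    simp only [h0] at this
    linarith
  -- I p q = f q - f p
  have hsplit : ∀ p > (0:ℝ), ∀ q > (0:ℝ), I p q = f q - f p := by
    intro p hp q hq
    have := hpath p hp p hp 1 one_pos q hq
    have h0 := hzero p hp
    rw [h0, hinv p hp] at this
    simp only [hf] at this ⊢
    linarith
  have hf1 : f 1 = 0 := hzero 1 one_pos
  -- multiplicativity of f
  have hmul : ∀ t > (0:ℝ), ∀ q > (0:ℝ), f (t * q) = f t + f q := by
    intro t ht q hq
    have := hunit t ht 1 one_pos q hq
    rw [hsplit (t*1) (by positivity) (t*q) (by positivity),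
        hsplit 1 one_pos q hq] at this
    rw [mul_one] at this
    linarith [hf1]
  -- g := f ∘ exp is additive and continuous
  set g : ℝ → ℝ := fun x => f (Real.exp x) with hg
  have gadd : ∀ x y, g (x + y) = g x + g y := by
    intro x y
    simp only [hg, Real.exp_add]
    exact hmul _ (Real.exp_pos x) _ (Real.exp_pos y)
  have fcont : ContinuousOn f (Set.Ioi 0) := (hdiff 1 one_pos).continuousOn
  have gcont : Continuous g := by
    apply fcont.comp_continuous Real.continuous_exp
    intro x; exact Real.exp_pos x
  let G : ℝ →+ ℝ := AddMonoidHom.mk' g gadd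
  have glin : ∀ x : ℝ, g x = g 1 * x := by
    intro x
    have := (G.toRealLinearMap gcont).map_smul x 1
    simpa [G, AddMonoidHom.toRealLinearMap, mul_comm, smul_eq_mul] using this
  -- f y = g 1 * log y for y > 0
  have flog : ∀ y > (0:ℝ), f y = g 1 * Real.log y := by
    intro y hy
    have := glin (Real.log y)
    simp only [hg, Real.exp_log hy] at this
    exact this
  have hk : 0 < g 1 := by
    have : f 1 < f (Real.exp 1) := by
      apply hmono 1 one_pos (Set.mem_Ioi.mpr one_pos)
        (Set.mem_Ioi.mpr (Real.exp_pos 1))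
      exact by have := Real.add_one_le_exp 1; linarith
    rw [hf1] at this
    simpa [hg] using this
  refine ⟨g 1, hk, fun p hp q hq => ?_⟩
  rw [hsplit p hp q hq, flog p hp, flog q hq,
      Real.log_div (ne_of_gt hq) (ne_of_gt hp)]
  ring
end

section
/- Let n ≥ 1, let p : Fin n → ℝ be a probability vector with p_i > 0 for all i, and let B ⊆ Fin n be a nonempty subset with p(B) = ∑_{j∈B} p_j. Consider the problem of minimizing H(q;p) = ∑_i q_i log(q_i/p_i) over all probability vectors q (q_i ≥ 0, ∑_i q_i = 1) subject to the constraint q_i = 0 for all i ∉ B. Then the unique minimizer is given by the Bayes rule q_i = p_i / p(B) for i ∈ B and q_i = 0 for i ∉ B, and the minimum value is −log p(B). -/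
/-!
Normalising `p` on `B` gives the probability vector `r = p / p(B)`, and for `q` supported on `B`
one has `H(q;p) = H(q;r) - log p(B)` with `H(q;r) = ∑_{i ∈ B} qᵢ log (qᵢ / rᵢ)`. Since `q` and `r`
have the same total mass on `B`, `H(q;r) = ∑_{i ∈ B} rᵢ klFun (qᵢ / rᵢ)` with
`klFun x = x log x + 1 - x ≥ 0`, vanishing only at `x = 1` (Gibbs' inequality).
-/

open Finset Real InformationTheory

lemma mul_log_div_eq_mul_klFun_add {a b : ℝ} (hb : b ≠ 0) :
    a * log (a / b) = b * klFun (a / b) + (a - b) := by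
  rw [klFun_apply]
  field_simp
  ring

lemma mul_log_div_div {a b c : ℝ} (hb : b ≠ 0) (hc : c ≠ 0) :
    a * log (a / (b / c)) = a * log (a / b) + a * log c := by
  rcases eq_or_ne a 0 with rfl | ha
  · simp
  · rw [div_div_eq_mul_div, mul_div_right_comm, log_mul (div_ne_zero ha hb) hc, mul_add]

lemma mul_klFun_div_nonneg {a b : ℝ} (ha : 0 ≤ a) (hb : 0 < b) : 0 ≤ b * klFun (a / b) :=
  mul_nonneg hb.le (klFun_nonneg (div_nonneg ha hb.le))

namespace Finset

variable {ι : Type*} {s : Finset ι} {q r : ι → ℝ}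

lemma sum_mul_log_div_div {c : ℝ} (hr : ∀ i ∈ s, r i ≠ 0) (hc : c ≠ 0) :
    ∑ i ∈ s, q i * log (q i / (r i / c)) =
      ∑ i ∈ s, q i * log (q i / r i) + (∑ i ∈ s, q i) * log c := by
  rw [sum_congr rfl fun i hi ↦ mul_log_div_div (hr i hi) hc, sum_add_distrib, sum_mul]

lemma sum_mul_log_div_eq_sum_mul_klFun (hr : ∀ i ∈ s, r i ≠ 0)
    (hsum : ∑ i ∈ s, q i = ∑ i ∈ s, r i) :
    ∑ i ∈ s, q i * log (q i / r i) = ∑ i ∈ s, r i * klFun (q i / r i) := by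
  rw [sum_congr rfl fun i hi ↦ mul_log_div_eq_mul_klFun_add (hr i hi), sum_add_distrib,
    sum_sub_distrib, hsum, sub_self, add_zero]

variable (hq : ∀ i ∈ s, 0 ≤ q i) (hr : ∀ i ∈ s, 0 < r i) (hsum : ∑ i ∈ s, q i = ∑ i ∈ s, r i)
include hq hr hsum

lemma sum_mul_log_div_nonneg : 0 ≤ ∑ i ∈ s, q i * log (q i / r i) := by
  rw [sum_mul_log_div_eq_sum_mul_klFun (fun i hi ↦ (hr i hi).ne') hsum]
  exact sum_nonneg fun i hi ↦ mul_klFun_div_nonneg (hq i hi) (hr i hi)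

lemma sum_mul_log_div_eq_zero_iff :
    ∑ i ∈ s, q i * log (q i / r i) = 0 ↔ ∀ i ∈ s, q i = r i := by
  rw [sum_mul_log_div_eq_sum_mul_klFun (fun i hi ↦ (hr i hi).ne') hsum,
    sum_eq_zero_iff_of_nonneg fun i hi ↦ mul_klFun_div_nonneg (hq i hi) (hr i hi)]
  refine forall₂_congr fun i hi ↦ ?_
  rw [mul_eq_zero_iff_left (hr i hi).ne', klFun_eq_zero_iff (div_nonneg (hq i hi) (hr i hi).le),
    div_eq_one_iff_eq (hr i hi).ne']

end Finset

lemma forall_mem_eq_iff_forall_eq_ite {ι : Type*} [DecidableEq ι] {s : Finset ι} {q r : ι → ℝ}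
    (hq : ∀ i ∉ s, q i = 0) :
    (∀ i ∈ s, q i = r i) ↔ ∀ i, q i = if i ∈ s then r i else 0 := by
  refine ⟨fun h i ↦ ?_, fun h i hi ↦ by simpa [hi] using h i⟩
  split_ifs with hi
  exacts [h i hi, hq i hi]

theorem min_relative_entropy_is_bayes_rule_general
    (n : ℕ) (p : Fin n → ℝ) (hp : ∀ i, 0 < p i)
    (B : Finset (Fin n)) (hB : B.Nonempty) :
    ∀ q : Fin n → ℝ, (∀ i, 0 ≤ q i) → (∑ i, q i = 1) → (∀ i ∉ B, q i = 0) →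
      (-Real.log (∑ j ∈ B, p j) ≤ ∑ i, q i * Real.log (q i / p i)) ∧
      ((∑ i, q i * Real.log (q i / p i) = -Real.log (∑ j ∈ B, p j)) ↔
        ∀ i, q i = if i ∈ B then p i / (∑ j ∈ B, p j) else 0) := by
  intro q hq hqsum hqB
  set S := ∑ j ∈ B, p j
  have hS : 0 < S := sum_pos (fun i _ ↦ hp i) hB
  have hqB_sum : ∑ i ∈ B, q i = 1 :=
    (sum_subset (subset_univ B) fun i _ hi ↦ hqB i hi).trans hqsum
  have hmass : ∑ i ∈ B, q i = ∑ i ∈ B, p i / S := by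
    rw [← sum_div, div_self hS.ne', hqB_sum]
  have hH : ∑ i, q i * log (q i / p i) = ∑ i ∈ B, q i * log (q i / (p i / S)) - log S := by
    rw [sum_mul_log_div_div (fun i _ ↦ (hp i).ne') hS.ne', hqB_sum, one_mul, add_sub_cancel_right,
      sum_subset (subset_univ B) fun i _ hi ↦ by rw [hqB i hi, zero_mul]]
  have hq' : ∀ i ∈ B, 0 ≤ q i := fun i _ ↦ hq i
  have hr : ∀ i ∈ B, 0 < p i / S := fun i _ ↦ div_pos (hp i) hS
  refine ⟨?_, ?_⟩
  · linarith [sum_mul_log_div_nonneg hq' hr hmass]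
  · rw [hH, sub_eq_neg_self, sum_mul_log_div_eq_zero_iff hq' hr hmass,
      forall_mem_eq_iff_forall_eq_ite hqB]

/-- Minimizing the relative entropy `H(q;p) = ∑ qᵢ log (qᵢ / pᵢ)` over
probability vectors supported on a nonempty subset `B` yields Bayes's rule:
the unique minimizer is `qᵢ = pᵢ / p(B)` on `B` and `0` off `B`, and the
minimum value is `-log p(B)` where `p(B) = ∑_{j ∈ B} pⱼ`. -/
theorem min_relative_entropy_is_bayes_rule
    (n : ℕ) (hn : 1 ≤ n) (p : Fin n → ℝ) (hp : ∀ i, 0 < p i)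
    (hpsum : ∑ i, p i = 1)
    (B : Finset (Fin n)) (hB : B.Nonempty) :
    ∀ q : Fin n → ℝ, (∀ i, 0 ≤ q i) → (∑ i, q i = 1) → (∀ i ∉ B, q i = 0) →
      (-Real.log (∑ j ∈ B, p j) ≤ ∑ i, q i * Real.log (q i / p i)) ∧
      ((∑ i, q i * Real.log (q i / p i) = -Real.log (∑ j ∈ B, p j)) ↔
        ∀ i, q i = if i ∈ B then p i / (∑ j ∈ B, p j) else 0) :=
  min_relative_entropy_is_bayes_rule_general n p hp B hB
end

section
/- Let n ≥ 1 and let p₀ : Fin n → ℝ be a probability vector with (p₀)_i > 0 for all i. Let B ⊆ Fin n be nonempty with S = ∑_{j∈B} (p₀)_j, and let p₁ be the conditioning of p₀ on B, i.e., (p₁)_i = (p₀)_i / S for i ∈ B and (p₁)_i = 0 otherwise. Let p₂ be any probability vector supported on B (i.e., (p₂)_i = 0 for i ∉ B). Then the relative entropies satisfy the additivity property H(p₂;p₀) = H(p₂;p₁) + H(p₁;p₀), where in H(p₂;p₁) and H(p₁;p₀) the sums range over i ∈ B. -/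
open Finset

/-- Additivity theorem of Hobson and Cheng: if `p₁` is the conditioning of the
prior `p₀` on a nonempty subset `B` and `p₂` is any probability vector
supported on `B`, then `H(p₂;p₀) = H(p₂;p₁) + H(p₁;p₀)`, where the sums in
`H(p₂;p₁)` and `H(p₁;p₀)` range over `B`. -/
theorem relative_entropy_additivity
    (n : ℕ) (hn : 1 ≤ n)
    (p₀ : Fin n → ℝ) (hp₀pos : ∀ i, 0 < p₀ i) (hp₀sum : ∑ i, p₀ i = 1)
    (B : Finset (Fin n)) (hB : B.Nonempty)
    (S : ℝ) (hS : S = ∑ j ∈ B, p₀ j)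
    (p₁ : Fin n → ℝ) (hp₁ : ∀ i, p₁ i = if i ∈ B then p₀ i / S else 0)
    (p₂ : Fin n → ℝ) (hp₂pos : ∀ i, 0 ≤ p₂ i) (hp₂sum : ∑ i, p₂ i = 1)
    (hp₂supp : ∀ i ∉ B, p₂ i = 0) :
    ∑ i, p₂ i * Real.log (p₂ i / p₀ i) =
      (∑ i ∈ B, p₂ i * Real.log (p₂ i / p₁ i)) +
      (∑ i ∈ B, p₁ i * Real.log (p₁ i / p₀ i)) := by
  have hSpos : 0 < S := by
    rw [hS]; exact Finset.sum_pos (fun j _ => hp₀pos j) hB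
  -- LHS restricts to B
  have hLHS : ∑ i, p₂ i * Real.log (p₂ i / p₀ i)
      = ∑ i ∈ B, p₂ i * Real.log (p₂ i / p₀ i) := by
    rw [← Finset.sum_subset (Finset.subset_univ B)]
    intro i _ hi
    rw [hp₂supp i hi, zero_mul]
  -- second sum equals log S
  have h2 : ∑ i ∈ B, p₁ i * Real.log (p₁ i / p₀ i) = - Real.log S := by
    have : ∀ i ∈ B, p₁ i * Real.log (p₁ i / p₀ i) = p₀ i / S * (- Real.log S) := by
      intro i hi
      rw [hp₁ i, if_pos hi]
      congr 1
      rw [div_right_comm, div_self (hp₀pos i).ne', one_div, Real.log_inv]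
    rw [Finset.sum_congr rfl this, ← Finset.sum_mul, ← Finset.sum_div, ← hS,
      div_self hSpos.ne', one_mul]
  have hp₂B : ∑ i ∈ B, p₂ i = 1 := by
    rw [← hp₂sum, eq_comm, ← Finset.sum_subset (Finset.subset_univ B)]
    intro i _ hi
    exact hp₂supp i hi
  -- termwise identity on B
  have h1 : ∀ i ∈ B, p₂ i * Real.log (p₂ i / p₀ i)
      = p₂ i * Real.log (p₂ i / p₁ i) + p₂ i * (- Real.log S) := by
    intro i hi
    rcases eq_or_lt_of_le (hp₂pos i) with h0 | h0
    · simp [← h0]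
    · rw [hp₁ i, if_pos hi, div_div_eq_mul_div, ← mul_add]
      congr 1
      rw [Real.log_div (mul_ne_zero h0.ne' hSpos.ne') (hp₀pos i).ne',
        Real.log_mul h0.ne' hSpos.ne',
        Real.log_div h0.ne' (hp₀pos i).ne']
      ring
  calc ∑ i, p₂ i * Real.log (p₂ i / p₀ i)
      = ∑ i ∈ B, (p₂ i * Real.log (p₂ i / p₁ i) + p₂ i * (- Real.log S)) := by
        rw [hLHS]; exact Finset.sum_congr rfl h1
    _ = (∑ i ∈ B, p₂ i * Real.log (p₂ i / p₁ i)) + (∑ i ∈ B, p₂ i) * (- Real.log S) := by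
        rw [Finset.sum_add_distrib, Finset.sum_mul]
    _ = _ := by rw [hp₂B, one_mul, h2]
end

section
/- Let n ≥ 1, let p₀ : Fin n → ℝ be a probability vector with (p₀)_i > 0 for all i, and let B ⊆ B' ⊆ Fin n with B nonempty. Let p₁ be the conditioning of p₀ on B, let p₁' be the conditioning of p₀ on B', and let p₂ be any probability vector supported on B. Then the two update paths p₀ → p₁ → p₂ and p₀ → p₁' → p₂ yield the same total information gain: H(p₂;p₁) + H(p₁;p₀) = H(p₂;p₁') + H(p₁';p₀), and both equal H(p₂;p₀). -/
open Finset

/-- Path independence of updating: if `B ⊆ B'` are subsets (with `B` nonempty),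
`p₁` and `p₁'` are the conditionings of the prior `p₀` on `B` and `B'`
respectively, and `p₂` is any probability vector supported on `B`, then the
two update paths `p₀ → p₁ → p₂` and `p₀ → p₁' → p₂` yield the same total
information gain, both equal to `H(p₂;p₀)`. -/
theorem updating_path_independence
    (n : ℕ) (hn : 1 ≤ n)
    (p₀ : Fin n → ℝ) (hp₀pos : ∀ i, 0 < p₀ i) (hp₀sum : ∑ i, p₀ i = 1)
    (B B' : Finset (Fin n)) (hB : B.Nonempty) (hBB' : B ⊆ B')
    (p₁ : Fin n → ℝ) (hp₁ : ∀ i, p₁ i = if i ∈ B then p₀ i / (∑ j ∈ B, p₀ j) else 0)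
    (p₁' : Fin n → ℝ)
    (hp₁' : ∀ i, p₁' i = if i ∈ B' then p₀ i / (∑ j ∈ B', p₀ j) else 0)
    (p₂ : Fin n → ℝ) (hp₂pos : ∀ i, 0 ≤ p₂ i) (hp₂sum : ∑ i, p₂ i = 1)
    (hp₂supp : ∀ i ∉ B, p₂ i = 0) :
    (∑ i ∈ B, p₂ i * Real.log (p₂ i / p₁ i)) +
      (∑ i, p₁ i * Real.log (p₁ i / p₀ i)) =
    (∑ i ∈ B', p₂ i * Real.log (p₂ i / p₁' i)) +
      (∑ i, p₁' i * Real.log (p₁' i / p₀ i)) ∧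
    (∑ i ∈ B, p₂ i * Real.log (p₂ i / p₁ i)) +
      (∑ i, p₁ i * Real.log (p₁ i / p₀ i)) =
      ∑ i, p₂ i * Real.log (p₂ i / p₀ i) := by
  have hsumB : ∑ i ∈ B, p₂ i = 1 := by
    rw [← hp₂sum]
    exact Finset.sum_subset (Finset.subset_univ B)
      (fun i _ hi => hp₂supp i hi) |>.symm ▸ rfl
  have key : ∀ (C : Finset (Fin n)), C.Nonempty → B ⊆ C → ∀ (q : Fin n → ℝ),
      (∀ i, q i = if i ∈ C then p₀ i / (∑ j ∈ C, p₀ j) else 0) →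
      (∑ i ∈ C, p₂ i * Real.log (p₂ i / q i)) + (∑ i, q i * Real.log (q i / p₀ i))
      = ∑ i ∈ B, p₂ i * Real.log (p₂ i / p₀ i) := by
    intro C hC hBC q hq
    set S := ∑ j ∈ C, p₀ j with hSdef
    have hS : 0 < S := Finset.sum_pos (fun i _ => hp₀pos i) hC
    have h2 : (∑ i, q i * Real.log (q i / p₀ i)) = - Real.log S := by
      rw [← Finset.sum_subset (Finset.subset_univ C)
        (fun i _ hi => by rw [hq i, if_neg hi, zero_mul])]
      have hterm : ∀ i ∈ C, q i * Real.log (q i / p₀ i)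
          = (p₀ i / S) * (- Real.log S) := by
        intro i hi
        rw [hq i, if_pos hi]
        congr 1
        have : p₀ i / S / p₀ i = S⁻¹ := by
          rw [div_div, mul_comm, ← div_div, div_self (hp₀pos i).ne', one_div]
        rw [this, Real.log_inv]
      rw [Finset.sum_congr rfl hterm, ← Finset.sum_mul, ← Finset.sum_div,
        ← hSdef, div_self hS.ne', one_mul]
    have h1 : (∑ i ∈ C, p₂ i * Real.log (p₂ i / q i))
        = (∑ i ∈ B, p₂ i * Real.log (p₂ i / p₀ i)) + Real.log S := by
      rw [← Finset.sum_subset hBC (fun i _ hi => by rw [hp₂supp i hi, zero_mul])]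
      have hterm : ∀ i ∈ B, p₂ i * Real.log (p₂ i / q i)
          = p₂ i * Real.log (p₂ i / p₀ i) + p₂ i * Real.log S := by
        intro i hi
        rcases eq_or_lt_of_le (hp₂pos i) with h0 | h0
        · rw [← h0]; ring
        · rw [hq i, if_pos (hBC hi), div_div_eq_mul_div, mul_comm (p₂ i) S,
            mul_div_assoc, Real.log_mul hS.ne'
              (div_pos h0 (hp₀pos i)).ne']
          ring
      rw [Finset.sum_congr rfl hterm, Finset.sum_add_distrib, ← Finset.sum_mul,
        hsumB, one_mul]
    rw [h1, h2]; ring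
  have hkB := key B hB (Finset.Subset.refl B) p₁ hp₁
  have hkB' := key B' (hB.mono hBB') hBB' p₁' hp₁'
  have hrhs : (∑ i, p₂ i * Real.log (p₂ i / p₀ i))
      = ∑ i ∈ B, p₂ i * Real.log (p₂ i / p₀ i) := by
    exact (Finset.sum_subset (Finset.subset_univ B)
      (fun i _ hi => by rw [hp₂supp i hi, zero_mul])).symm
  exact ⟨hkB.trans hkB'.symm, hkB.trans hrhs.symm⟩
end
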